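/- arXiv:2304.09024 — 2 statements merged into one kernel-verified Lean document; each statement's English description precedes it below -/
import Mathlib

section
/- For probability density functions p and q on a measurable space, the quantity ∫ p·log(p/(p+q)) + ∫ q·log(q/(p+q)) equals -log 4 + 2·JSD(p‖q), where JSD is the Jensen–Shannon divergence; in particular it is at least -log 4, with equality iff p = q almost everywhere. -/
/-!
Pointwise, `a log (a / s) = a log (a / (s / 2)) - a log 2` for `0 ≤ a ≤ s`, so integrating against two
probability densities turns the left-hand side into `2 JSD - 2 log 2`. Nonnegativity of the JSD integrand
with `m = (a + b) / 2` comes from `x - 1 ≤ x log x` at `x = a / m` and `x = b / m`: the two lower bounds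
`a - m` and `b - m` add up to `0`, and the bound is strict unless `a = m = b`.
-/

open MeasureTheory

/-- Jensen–Shannon divergence between two densities w.r.t. a common measure. -/
noncomputable def JSD {α : Type*} [MeasurableSpace α] (μ : Measure α) (p q : α → ℝ) : ℝ :=
  (1/2) * ∫ x, p x * Real.log (p x / ((p x + q x) / 2)) ∂μ +
  (1/2) * ∫ x, q x * Real.log (q x / ((p x + q x) / 2)) ∂μ

open Real

lemma mul_log_div_half_eq {a s : ℝ} (ha : 0 ≤ a) (has : a ≤ s) :
    a * log (a / (s / 2)) = a * log (a / s) + a * log 2 := by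
  rcases ha.eq_or_lt with rfl | ha
  · simp
  have hs : 0 < s := ha.trans_le has
  rw [div_div_eq_mul_div, mul_div_right_comm, log_mul (by positivity) two_ne_zero]
  ring

lemma sub_le_mul_log_div {a c : ℝ} (ha : 0 ≤ a) (hc : 0 < c) : a - c ≤ a * log (a / c) := by
  have h := mul_le_mul_of_nonneg_left (self_sub_one_le_mul_log (div_nonneg ha hc.le)) hc.le
  field_simp at h ⊢
  linarith

lemma sub_lt_mul_log_div {a c : ℝ} (ha : 0 ≤ a) (hc : 0 < c) (hac : a ≠ c) :
    a - c < a * log (a / c) := by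
  have hne : a / c ≠ 1 := fun h => hac ((div_eq_one_iff_eq hc.ne').mp h)
  have h := mul_lt_mul_of_pos_left (self_sub_one_lt_mul_log (div_nonneg ha hc.le) hne) hc
  field_simp at h ⊢
  linarith

lemma mul_log_div_midpoint_add_nonneg {a b : ℝ} (ha : 0 ≤ a) (hb : 0 ≤ b) :
    0 ≤ a * log (a / ((a + b) / 2)) + b * log (b / ((a + b) / 2)) := by
  rcases (add_nonneg ha hb).eq_or_lt with hab | hab
  · obtain ⟨rfl, rfl⟩ : a = 0 ∧ b = 0 := ⟨by linarith, by linarith⟩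
    simp
  have hm : 0 < (a + b) / 2 := by positivity
  linarith [sub_le_mul_log_div ha hm, sub_le_mul_log_div hb hm]

lemma mul_log_div_midpoint_add_eq_zero_iff {a b : ℝ} (ha : 0 ≤ a) (hb : 0 ≤ b) :
    a * log (a / ((a + b) / 2)) + b * log (b / ((a + b) / 2)) = 0 ↔ a = b := by
  constructor
  · intro h
    by_contra hab
    have hm : 0 < (a + b) / 2 := by
      by_contra! hm
      exact hab (by linarith)
    have hne : a ≠ (a + b) / 2 := fun h => hab (by linarith)
    linarith [sub_lt_mul_log_div ha hm hne, sub_le_mul_log_div hb hm]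
  · rintro rfl
    rcases ha.eq_or_lt with rfl | ha
    · simp
    · rw [add_self_div_two, div_self ha.ne']
      simp

section

variable {α : Type*} [MeasurableSpace α] {μ : Measure α}

lemma integrable_mul_log_div_half {f s : α → ℝ} (hf0 : ∀ x, 0 ≤ f x) (hfs : ∀ x, f x ≤ s x)
    (hf : Integrable f μ) (hfls : Integrable (fun x => f x * log (f x / s x)) μ) :
    Integrable (fun x => f x * log (f x / (s x / 2))) μ := by
  simp_rw [mul_log_div_half_eq (hf0 _) (hfs _)]
  exact hfls.add (hf.mul_const _)

lemma integral_mul_log_div_half {f s : α → ℝ} (hf0 : ∀ x, 0 ≤ f x) (hfs : ∀ x, f x ≤ s x)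
    (hf : Integrable f μ) (hfls : Integrable (fun x => f x * log (f x / s x)) μ) :
    ∫ x, f x * log (f x / (s x / 2)) ∂μ = ∫ x, f x * log (f x / s x) ∂μ + (∫ x, f x ∂μ) * log 2 := by
  simp_rw [mul_log_div_half_eq (hf0 _) (hfs _)]
  rw [integral_add hfls (hf.mul_const _), integral_mul_const]

variable {p q : α → ℝ}

lemma JSD_eq_half_integral
    (hip : Integrable (fun x => p x * log (p x / ((p x + q x) / 2))) μ)
    (hiq : Integrable (fun x => q x * log (q x / ((p x + q x) / 2))) μ) :
    JSD μ p q = (1 / 2) * ∫ x, p x * log (p x / ((p x + q x) / 2)) +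
      q x * log (q x / ((p x + q x) / 2)) ∂μ := by
  rw [JSD, integral_add hip hiq]
  ring

lemma JSD_nonneg (hp0 : ∀ x, 0 ≤ p x) (hq0 : ∀ x, 0 ≤ q x)
    (hip : Integrable (fun x => p x * log (p x / ((p x + q x) / 2))) μ)
    (hiq : Integrable (fun x => q x * log (q x / ((p x + q x) / 2))) μ) :
    0 ≤ JSD μ p q := by
  rw [JSD_eq_half_integral hip hiq]
  exact mul_nonneg (by norm_num)
    (integral_nonneg fun x => mul_log_div_midpoint_add_nonneg (hp0 x) (hq0 x))

lemma JSD_eq_zero_iff (hp0 : ∀ x, 0 ≤ p x) (hq0 : ∀ x, 0 ≤ q x)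
    (hip : Integrable (fun x => p x * log (p x / ((p x + q x) / 2))) μ)
    (hiq : Integrable (fun x => q x * log (q x / ((p x + q x) / 2))) μ) :
    JSD μ p q = 0 ↔ p =ᵐ[μ] q := by
  rw [JSD_eq_half_integral hip hiq, mul_eq_zero, or_iff_right (by norm_num),
    integral_eq_zero_iff_of_nonneg (fun x => mul_log_div_midpoint_add_nonneg (hp0 x) (hq0 x))
      (hip.add hiq)]
  exact Filter.eventually_congr
    (Filter.Eventually.of_forall fun x => mul_log_div_midpoint_add_eq_zero_iff (hp0 x) (hq0 x))

end

theorem gan_value_jsd_identity_general {α : Type*} [MeasurableSpace α] (μ : Measure α)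
    (p q : α → ℝ)
    (hp0 : ∀ x, 0 ≤ p x) (hq0 : ∀ x, 0 ≤ q x)
    (hp1 : ∫ x, p x ∂μ = 1) (hq1 : ∫ x, q x ∂μ = 1)
    (hpi : Integrable p μ) (hqi : Integrable q μ)
    (hip : Integrable (fun x => p x * Real.log (p x / (p x + q x))) μ)
    (hiq : Integrable (fun x => q x * Real.log (q x / (p x + q x))) μ) :
    (∫ x, p x * Real.log (p x / (p x + q x)) ∂μ) +
      (∫ x, q x * Real.log (q x / (p x + q x)) ∂μ)
      = -Real.log 4 + 2 * JSD μ p q ∧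
    -Real.log 4 ≤ (∫ x, p x * Real.log (p x / (p x + q x)) ∂μ) +
      (∫ x, q x * Real.log (q x / (p x + q x)) ∂μ) ∧
    ((∫ x, p x * Real.log (p x / (p x + q x)) ∂μ) +
      (∫ x, q x * Real.log (q x / (p x + q x)) ∂μ) = -Real.log 4 ↔ p =ᵐ[μ] q) := by
  have hps : ∀ x, p x ≤ p x + q x := fun x => le_add_of_nonneg_right (hq0 x)
  have hqs : ∀ x, q x ≤ p x + q x := fun x => le_add_of_nonneg_left (hp0 x)
  have hip' := integrable_mul_log_div_half hp0 hps hpi hip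
  have hiq' := integrable_mul_log_div_half hq0 hqs hqi hiq
  have hlog4 : log 4 = 2 * log 2 := by
    rw [show (4 : ℝ) = 2 ^ 2 by norm_num, log_pow, Nat.cast_ofNat]
  have hsum : (∫ x, p x * log (p x / (p x + q x)) ∂μ) + ∫ x, q x * log (q x / (p x + q x)) ∂μ
      = -log 4 + 2 * JSD μ p q := by
    rw [JSD, integral_mul_log_div_half hp0 hps hpi hip, integral_mul_log_div_half hq0 hqs hqi hiq,
      hp1, hq1, hlog4]
    ring
  have hJ0 := JSD_nonneg hp0 hq0 hip' hiq'
  rw [hsum, ← JSD_eq_zero_iff hp0 hq0 hip' hiq']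
  exact ⟨rfl, by linarith, by constructor <;> intro h <;> linarith⟩

theorem gan_value_jsd_identity {α : Type*} [MeasurableSpace α] (μ : Measure α)
    [SigmaFinite μ] (p q : α → ℝ)
    (hpm : Measurable p) (hqm : Measurable q)
    (hp0 : ∀ x, 0 ≤ p x) (hq0 : ∀ x, 0 ≤ q x)
    (hp1 : ∫ x, p x ∂μ = 1) (hq1 : ∫ x, q x ∂μ = 1)
    (hpi : Integrable p μ) (hqi : Integrable q μ)
    (hip : Integrable (fun x => p x * Real.log (p x / (p x + q x))) μ)
    (hiq : Integrable (fun x => q x * Real.log (q x / (p x + q x))) μ) :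
    (∫ x, p x * Real.log (p x / (p x + q x)) ∂μ) +
      (∫ x, q x * Real.log (q x / (p x + q x)) ∂μ)
      = -Real.log 4 + 2 * JSD μ p q ∧
    -Real.log 4 ≤ (∫ x, p x * Real.log (p x / (p x + q x)) ∂μ) +
      (∫ x, q x * Real.log (q x / (p x + q x)) ∂μ) ∧
    ((∫ x, p x * Real.log (p x / (p x + q x)) ∂μ) +
      (∫ x, q x * Real.log (q x / (p x + q x)) ∂μ) = -Real.log 4 ↔ p =ᵐ[μ] q) :=
  gan_value_jsd_identity_general μ p q hp0 hq0 hp1 hq1 hpi hqi hip hiq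
end

section
/- The value of the GAN minimax game, C(G) = ∫ p·log D* + ∫ q·log(1 - D*) with the optimal discriminator D* = p/(p+q), attains its global minimum -log 4 over all generator densities q exactly when q = p almost everywhere. -/
/-!
Since `1 - D* = q / (p + q)`, the value is `-log 4 + 2 JSD(p ‖ q)`. With `s = a + b`, twice the
pointwise Jensen–Shannon integrand is `s / 2 · (klFun (2a / s) + klFun (2b / s))`, where
`klFun x = x log x + 1 - x ≥ 0` vanishes only at `x = 1`. So the excess over `-log 4` is the
integral of a nonnegative function that vanishes exactly where `p = q`.
-/

open MeasureTheory Real InformationTheory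

/-- The integral of `jsdIntegrand (p x) (q x)` is `2 JSD(p ‖ q)` when `∫ p = ∫ q = 1`. -/
noncomputable def jsdIntegrand (a b : ℝ) : ℝ :=
  a * log (a / (a + b)) + b * log (b / (a + b)) + (a + b) * log 2

lemma mul_log_one_sub_div_add {a b : ℝ} (ha : 0 ≤ a) (hb : 0 ≤ b) :
    b * log (1 - a / (a + b)) = b * log (b / (a + b)) := by
  rcases hb.eq_or_lt with rfl | hb
  · simp
  · rw [one_sub_div (by positivity), add_sub_cancel_left]

lemma mul_log_two_mul_div {a s : ℝ} (hs : s ≠ 0) :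
    a * log (2 * a / s) = a * log 2 + a * log (a / s) := by
  rcases eq_or_ne a 0 with rfl | ha
  · simp
  · rw [mul_div_assoc, log_mul two_ne_zero (div_ne_zero ha hs)]
    ring

lemma jsdIntegrand_eq_klFun {a b : ℝ} (hs : a + b ≠ 0) :
    jsdIntegrand a b = (a + b) / 2 * (klFun (2 * a / (a + b)) + klFun (2 * b / (a + b))) := by
  have hlog : ∀ c, (a + b) / 2 * (2 * c / (a + b) * log (2 * c / (a + b))) =
      c * log 2 + c * log (c / (a + b)) := fun c => by
    rw [← mul_log_two_mul_div hs]
    field_simp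
  simp only [klFun_apply, mul_add, mul_sub, hlog, jsdIntegrand]
  field_simp
  ring

lemma jsdIntegrand_nonneg {a b : ℝ} (ha : 0 ≤ a) (hb : 0 ≤ b) : 0 ≤ jsdIntegrand a b := by
  rcases (add_nonneg ha hb).eq_or_lt with hs | hs
  · simp [jsdIntegrand, ← hs]
  · rw [jsdIntegrand_eq_klFun hs.ne']
    exact mul_nonneg (by positivity) (add_nonneg (klFun_nonneg (by positivity))
      (klFun_nonneg (by positivity)))

lemma jsdIntegrand_eq_zero_iff {a b : ℝ} (ha : 0 ≤ a) (hb : 0 ≤ b) :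
    jsdIntegrand a b = 0 ↔ a = b := by
  rcases (add_nonneg ha hb).eq_or_lt with hs | hs
  · simp [jsdIntegrand, ← hs]
    linarith
  have hka := klFun_nonneg (show 0 ≤ 2 * a / (a + b) by positivity)
  have hkb := klFun_nonneg (show 0 ≤ 2 * b / (a + b) by positivity)
  rw [jsdIntegrand_eq_klFun hs.ne', mul_eq_zero, add_eq_zero_iff_of_nonneg hka hkb,
    klFun_eq_zero_iff (by positivity), klFun_eq_zero_iff (by positivity),
    div_eq_one_iff_eq hs.ne', div_eq_one_iff_eq hs.ne']
  constructor
  · rintro (h | ⟨h, -⟩) <;> linarith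
  · exact fun h => Or.inr ⟨by linarith, by linarith⟩

section Integral

variable {α : Type*} [MeasurableSpace α] {μ : Measure α} {p q : α → ℝ}

lemma integrable_jsdIntegrand (hpi : Integrable p μ) (hqi : Integrable q μ)
    (hip : Integrable (fun x => p x * log (p x / (p x + q x))) μ)
    (hiq : Integrable (fun x => q x * log (q x / (p x + q x))) μ) :
    Integrable (fun x => jsdIntegrand (p x) (q x)) μ :=
  (hip.add hiq).add ((hpi.add hqi).mul_const (log 2))

lemma integral_jsdIntegrand (hpi : Integrable p μ) (hqi : Integrable q μ)
    (hip : Integrable (fun x => p x * log (p x / (p x + q x))) μ)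
    (hiq : Integrable (fun x => q x * log (q x / (p x + q x))) μ) :
    ∫ x, jsdIntegrand (p x) (q x) ∂μ =
      (∫ x, p x * log (p x / (p x + q x)) ∂μ) + (∫ x, q x * log (q x / (p x + q x)) ∂μ) +
        ((∫ x, p x ∂μ) + ∫ x, q x ∂μ) * log 2 := by
  have hpq : Integrable (fun x => p x + q x) μ := hpi.add hqi
  have hlogs : Integrable
      (fun x => p x * log (p x / (p x + q x)) + q x * log (q x / (p x + q x))) μ := hip.add hiq
  simp only [jsdIntegrand]
  rw [integral_add hlogs (hpq.mul_const _), integral_add hip hiq, integral_mul_const,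
    integral_add hpi hqi]

end Integral

theorem gan_minimax_value_min_general {α : Type*} [MeasurableSpace α] (μ : Measure α)
    (p q : α → ℝ)
    (hp0 : ∀ x, 0 ≤ p x) (hq0 : ∀ x, 0 ≤ q x)
    (hp1 : ∫ x, p x ∂μ = 1) (hq1 : ∫ x, q x ∂μ = 1)
    (hpi : Integrable p μ) (hqi : Integrable q μ)
    (hip : Integrable (fun x => p x * Real.log (p x / (p x + q x))) μ)
    (hiq : Integrable (fun x => q x * Real.log (q x / (p x + q x))) μ) :
    -Real.log 4 ≤ (∫ x, p x * Real.log (p x / (p x + q x)) ∂μ) +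
      (∫ x, q x * Real.log (1 - p x / (p x + q x)) ∂μ) ∧
    ((∫ x, p x * Real.log (p x / (p x + q x)) ∂μ) +
      (∫ x, q x * Real.log (1 - p x / (p x + q x)) ∂μ) = -Real.log 4 ↔ q =ᵐ[μ] p) := by
  simp only [mul_log_one_sub_div_add (hp0 _) (hq0 _)]
  have hJ := integral_jsdIntegrand hpi hqi hip hiq
  have hJ0 : 0 ≤ ∫ x, jsdIntegrand (p x) (q x) ∂μ :=
    integral_nonneg fun x => jsdIntegrand_nonneg (hp0 x) (hq0 x)
  have hlog4 : log 4 = 2 * log 2 := by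
    rw [show (4 : ℝ) = 2 ^ 2 by norm_num, log_pow, Nat.cast_ofNat]
  rw [hp1, hq1] at hJ
  refine ⟨by linarith, ?_⟩
  calc _ ↔ ∫ x, jsdIntegrand (p x) (q x) ∂μ = 0 := by constructor <;> intro <;> linarith
    _ ↔ (fun x => jsdIntegrand (p x) (q x)) =ᵐ[μ] 0 :=
      integral_eq_zero_iff_of_nonneg (fun x => jsdIntegrand_nonneg (hp0 x) (hq0 x))
        (integrable_jsdIntegrand hpi hqi hip hiq)
    _ ↔ q =ᵐ[μ] p := Filter.eventually_congr (.of_forall fun x => by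
      simp only [Pi.zero_apply, jsdIntegrand_eq_zero_iff (hp0 x) (hq0 x), eq_comm])

theorem gan_minimax_value_min {α : Type*} [MeasurableSpace α] (μ : Measure α)
    [SigmaFinite μ] (p q : α → ℝ)
    (hpm : Measurable p) (hqm : Measurable q)
    (hp0 : ∀ x, 0 ≤ p x) (hq0 : ∀ x, 0 ≤ q x)
    (hp1 : ∫ x, p x ∂μ = 1) (hq1 : ∫ x, q x ∂μ = 1)
    (hpi : Integrable p μ) (hqi : Integrable q μ)
    (hip : Integrable (fun x => p x * Real.log (p x / (p x + q x))) μ)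
    (hiq : Integrable (fun x => q x * Real.log (q x / (p x + q x))) μ) :
    -Real.log 4 ≤ (∫ x, p x * Real.log (p x / (p x + q x)) ∂μ) +
      (∫ x, q x * Real.log (1 - p x / (p x + q x)) ∂μ) ∧
    ((∫ x, p x * Real.log (p x / (p x + q x)) ∂μ) +
      (∫ x, q x * Real.log (1 - p x / (p x + q x)) ∂μ) = -Real.log 4 ↔ q =ᵐ[μ] p) :=
  gan_minimax_value_min_general μ p q hp0 hq0 hp1 hq1 hpi hqi hip hiq
end
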